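/- arXiv:2203.05261 — 2 statements merged into one kernel-verified Lean document; each statement's English description precedes it below -/
import Mathlib

section
/- Let d ≥ 1, let f, g : ℝ^d → ℂ be affine functions, let v_1, …, v_{d+1} ∈ ℝ^d be affinely independent with d-simplex s = conv(v_1, …, v_{d+1}), and set f_s = (f(v_1), …, f(v_{d+1})) ∈ ℂ^{d+1}, g_s = (g(v_1), …, g(v_{d+1})) ∈ ℂ^{d+1}. Then ∫_s conj(f(x)) g(x) dx = (vol(s) / ((d+1)(d+2))) · f_s^H P g_s, where P = 1_{d+1} + I_{d+1} and f_s^H is the conjugate transpose of f_s. -/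
/-!
Barycentric coordinates `t ↦ (t, 1 - ∑ t)` identify the unit simplex `{t ≥ 0, ∑ t ≤ 1}` with the
standard simplex, so `t ↦ ∑ λᵢ(t) vᵢ` is an affine bijection of the unit simplex onto `s`. By the
change of variables formula the integral over `s` is `d! vol(s)` times the integral over the unit
simplex, and an affine `f` pulls back to `∑ λᵢ f(vᵢ)`. What remains are the moments
`∫ λᵢ λⱼ = (1 + δᵢⱼ) / (d + 2)!`, instances of the Dirichlet formula
`∫ ∏ λᵢ ^ αᵢ = ∏ αᵢ! / (d + ∑ αᵢ)!`. That formula follows by induction on `d`: the slice of the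
unit simplex at first coordinate `s` is the unit simplex scaled by `1 - s`, which leaves the Beta
integral `∫₀¹ sᵐ (1 - s)ⁿ = m! n! / (m + n + 1)!`.
-/

open MeasureTheory Set
open scoped Nat Pointwise

noncomputable section

def unitSimplex (d : ℕ) : Set (Fin d → ℝ) := {x | (∀ i, 0 ≤ x i) ∧ ∑ i, x i ≤ 1}

def baryCoord {d : ℕ} (t : Fin d → ℝ) : Fin (d + 1) → ℝ := Fin.snoc t (1 - ∑ i, t i)

def edgeMap {F : Type*} [NormedAddCommGroup F] [NormedSpace ℝ F] {d : ℕ}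
    (v : Fin (d + 1) → F) : (Fin d → ℝ) →L[ℝ] F :=
  ∑ k, (ContinuousLinearMap.proj k : (Fin d → ℝ) →L[ℝ] ℝ).smulRight
    (v k.castSucc - v (Fin.last d))

end

variable {E : Type*} [NormedAddCommGroup E] [NormedSpace ℝ E]

theorem sum_baryCoord {d : ℕ} (t : Fin d → ℝ) : ∑ i, baryCoord t i = 1 := by
  simp [baryCoord, Fin.sum_univ_castSucc]

theorem continuous_baryCoord (d : ℕ) : Continuous (baryCoord (d := d)) := by
  unfold baryCoord
  fun_prop

theorem baryCoord_injective (d : ℕ) : Function.Injective (baryCoord (d := d)) :=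
  fun t t' h => by simpa [baryCoord] using congrArg Fin.init h

theorem baryCoord_init {d : ℕ} {w : Fin (d + 1) → ℝ} (hw : ∑ i, w i = 1) :
    baryCoord (Fin.init w) = w := by
  rw [Fin.sum_univ_castSucc] at hw
  rw [baryCoord, ← hw]
  simp [Fin.init]

theorem baryCoord_mem_stdSimplex_iff {d : ℕ} (t : Fin d → ℝ) :
    baryCoord t ∈ stdSimplex ℝ (Fin (d + 1)) ↔ t ∈ unitSimplex d := by
  simp [baryCoord, stdSimplex, unitSimplex, Fin.forall_fin_succ', Fin.sum_univ_castSucc]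

theorem image_baryCoord_unitSimplex (d : ℕ) :
    baryCoord '' unitSimplex d = stdSimplex ℝ (Fin (d + 1)) := by
  refine Subset.antisymm ?_ fun w hw => ⟨Fin.init w, ?_, baryCoord_init hw.2⟩
  · rintro _ ⟨t, ht, rfl⟩
    exact (baryCoord_mem_stdSimplex_iff t).2 ht
  · rw [← baryCoord_mem_stdSimplex_iff, baryCoord_init hw.2]
    exact hw

theorem baryCoord_cons_smul {d : ℕ} (s : ℝ) (w : Fin d → ℝ) :
    baryCoord (Fin.cons s ((1 - s) • w) : Fin (d + 1) → ℝ) =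
      Fin.cons s ((1 - s) • baryCoord w) := by
  rw [baryCoord, ← Fin.cons_snoc_eq_snoc_cons, baryCoord]
  congr 1
  ext i
  refine Fin.lastCases ?_ (fun i => ?_) i
  · simp [Fin.sum_univ_succ, ← Finset.mul_sum]
    ring
  · simp

theorem isCompact_unitSimplex (d : ℕ) : IsCompact (unitSimplex d) := by
  have : unitSimplex d = Fin.init '' stdSimplex ℝ (Fin (d + 1)) := by
    rw [← image_baryCoord_unitSimplex, image_image]
    simp [baryCoord]
  rw [this]
  exact (isCompact_stdSimplex ℝ _).image (by fun_prop)

theorem measurableSet_unitSimplex (d : ℕ) : MeasurableSet (unitSimplex d) :=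
  (isCompact_unitSimplex d).isClosed.measurableSet

theorem Continuous.integrableOn_unitSimplex {E : Type*} [NormedAddCommGroup E] {d : ℕ}
    {f : (Fin d → ℝ) → E} (hf : Continuous f) : IntegrableOn f (unitSimplex d) :=
  hf.continuousOn.integrableOn_compact (isCompact_unitSimplex d)

theorem cons_mem_unitSimplex_iff {d : ℕ} {s : ℝ} (hs : s < 1) (u : Fin d → ℝ) :
    Fin.cons s u ∈ unitSimplex (d + 1) ↔ 0 ≤ s ∧ u ∈ (1 - s) • unitSimplex d := by
  have hc : 0 < 1 - s := by linarith
  rw [mem_smul_set_iff_inv_smul_mem₀ hc.ne']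
  simp only [unitSimplex, mem_ofPred_eq, Fin.forall_fin_succ, Fin.cons_zero, Fin.cons_succ,
    Fin.sum_univ_succ, Pi.smul_apply, smul_eq_mul, ← Finset.mul_sum]
  rw [inv_mul_le_iff₀ hc]
  simp only [mul_nonneg_iff_of_pos_left (inv_pos.2 hc), mul_one]
  constructor
  · rintro ⟨⟨h0, hu⟩, hsum⟩
    exact ⟨h0, hu, by linarith⟩
  · rintro ⟨h0, hu, hsum⟩
    exact ⟨⟨h0, hu⟩, by linarith⟩

theorem indicator_cons_unitSimplex_of_notMem {M : Type*} [Zero M] {d : ℕ}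
    (F : (Fin (d + 1) → ℝ) → M) {s : ℝ} (hs : s ∉ Icc (0 : ℝ) 1) (u : Fin d → ℝ) :
    (unitSimplex (d + 1)).indicator F (Fin.cons s u) = 0 := by
  refine indicator_of_notMem (fun (⟨hnonneg, hsum⟩ : _ ∈ unitSimplex _) => hs ⟨?_, ?_⟩) _
  · simpa using hnonneg 0
  · have hu : 0 ≤ ∑ i, u i := Finset.sum_nonneg fun i _ => by simpa using hnonneg i.succ
    rw [Fin.sum_univ_succ] at hsum
    simp only [Fin.cons_zero, Fin.cons_succ] at hsum
    linarith

theorem integral_pow_mul_one_sub_pow (m n : ℕ) :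
    ∫ s in (0 : ℝ)..1, s ^ m * (1 - s) ^ n = (m ! * n ! : ℝ) / (m + n + 1)! := by
  induction n generalizing m with
  | zero =>
    simp [integral_pow, Nat.factorial_succ]
    field_simp
  | succ n ih =>
    have hsplit : ∀ s : ℝ, s ^ m * (1 - s) ^ (n + 1) =
        s ^ m * (1 - s) ^ n - s ^ (m + 1) * (1 - s) ^ n := fun s => by ring
    simp_rw [hsplit]
    rw [intervalIntegral.integral_sub (by apply Continuous.intervalIntegrable; fun_prop)
      (by apply Continuous.intervalIntegrable; fun_prop), ih, ih,
      show m + 1 + n + 1 = m + n + 1 + 1 by ring, show m + (n + 1) + 1 = m + n + 1 + 1 by ring]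
    simp only [Nat.factorial_succ, Nat.cast_mul, Nat.cast_add, Nat.cast_one]
    field_simp
    ring

theorem integral_indicator_cons_unitSimplex {d : ℕ} (F : (Fin (d + 1) → ℝ) → E) {s : ℝ}
    (hs : s ∈ Ioo (0 : ℝ) 1) :
    ∫ u, (unitSimplex (d + 1)).indicator F (Fin.cons s u) =
      (1 - s) ^ d • ∫ w in unitSimplex d, F (Fin.cons s ((1 - s) • w)) := by
  have hc : 0 < 1 - s := by linarith [hs.2]
  have hslice : ∀ u, (unitSimplex (d + 1)).indicator F (Fin.cons s u) =
      ((1 - s) • unitSimplex d).indicator (fun u => F (Fin.cons s u)) u := fun u => by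
    by_cases hu : u ∈ (1 - s) • unitSimplex d
    · rw [indicator_of_mem hu,
        indicator_of_mem ((cons_mem_unitSimplex_iff hs.2 u).2 ⟨hs.1.le, hu⟩)]
    · rw [indicator_of_notMem hu,
        indicator_of_notMem fun h => hu ((cons_mem_unitSimplex_iff hs.2 u).1 h).2]
  simp_rw [hslice]
  rw [integral_indicator ((measurableSet_unitSimplex d).const_smul₀ _),
    Measure.setIntegral_comp_smul_of_pos volume (fun u => F (Fin.cons s u)) _ hc,
    Module.finrank_fin_fun, smul_inv_smul₀ (pow_ne_zero _ hc.ne')]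

theorem integral_unitSimplex_succ {d : ℕ} {F : (Fin (d + 1) → ℝ) → E}
    (hF : IntegrableOn F (unitSimplex (d + 1))) :
    ∫ x in unitSimplex (d + 1), F x =
      ∫ s in (0 : ℝ)..1, (1 - s) ^ d • ∫ w in unitSimplex d, F (Fin.cons s ((1 - s) • w)) := by
  set G := (unitSimplex (d + 1)).indicator F
  have hmp := (volume_preserving_piFinSuccAbove (fun _ : Fin (d + 1) => ℝ) 0).symm
  have hcons : ∀ q : ℝ × (Fin d → ℝ),
      (MeasurableEquiv.piFinSuccAbove (fun _ => ℝ) 0).symm q = Fin.cons q.1 q.2 := fun q => by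
    simp [MeasurableEquiv.piFinSuccAbove_symm_apply, Fin.insertNthEquiv]
  have hGint : Integrable (fun q : ℝ × (Fin d → ℝ) => G (Fin.cons q.1 q.2))
      (volume.prod volume) := by
    simp_rw [← hcons]
    exact (hmp.integrable_comp_emb (MeasurableEquiv.measurableEmbedding _)).2
      ((integrable_indicator_iff (measurableSet_unitSimplex _)).2 hF)
  calc ∫ x in unitSimplex (d + 1), F x = ∫ x, G x :=
        (integral_indicator (measurableSet_unitSimplex _)).symm
    _ = ∫ q : ℝ × (Fin d → ℝ), G (Fin.cons q.1 q.2) := by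
      simp_rw [← hcons]
      exact (hmp.integral_comp' G).symm
    _ = ∫ s, ∫ u, G (Fin.cons s u) := integral_prod _ hGint
    _ = ∫ s in Icc 0 1, ∫ u, G (Fin.cons s u) :=
      (setIntegral_eq_integral_of_forall_compl_eq_zero fun s hs => by
        simp_rw [G, indicator_cons_unitSimplex_of_notMem F hs, integral_zero]).symm
    _ = ∫ s in Ioo 0 1, (1 - s) ^ d • ∫ w in unitSimplex d, F (Fin.cons s ((1 - s) • w)) := by
      rw [integral_Icc_eq_integral_Ioo]
      exact setIntegral_congr_fun measurableSet_Ioo fun s hs =>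
        integral_indicator_cons_unitSimplex F hs
    _ = _ := by rw [intervalIntegral.integral_of_le zero_le_one, integral_Ioc_eq_integral_Ioo]

theorem integral_unitSimplex_prod_baryCoord_pow (d : ℕ) (α : Fin (d + 1) → ℕ) :
    ∫ t in unitSimplex d, ∏ i, baryCoord t i ^ α i =
      (∏ i, ((α i)! : ℝ)) / (d + ∑ i, α i)! := by
  induction d with
  | zero =>
    have : unitSimplex 0 = univ := by ext; simp [unitSimplex]
    simp only [this, Measure.restrict_univ, baryCoord, Fin.snoc]
    rw [volume_pi, Measure.pi_of_empty (x := Fin.elim0)]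
    simp [Nat.factorial_ne_zero]
  | succ d ih =>
    have hprod : ∀ (s : ℝ) (w : Fin d → ℝ),
        ∏ i, baryCoord (Fin.cons s ((1 - s) • w) : Fin (d + 1) → ℝ) i ^ α i =
          s ^ α 0 * (1 - s) ^ (∑ i, α (Fin.succ i)) *
            ∏ i, baryCoord w i ^ α (Fin.succ i) := fun s w => by
      simp only [baryCoord_cons_smul, Fin.prod_univ_succ, Fin.cons_zero, Fin.cons_succ,
        Pi.smul_apply, smul_eq_mul, mul_pow, Finset.prod_mul_distrib,
        Finset.prod_pow_eq_pow_sum, mul_assoc]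
    rw [integral_unitSimplex_succ (Continuous.integrableOn_unitSimplex (by
      have := continuous_baryCoord (d + 1)
      fun_prop))]
    simp_rw [hprod, integral_const_mul, ih, smul_eq_mul]
    set k := ∑ i, α (Fin.succ i)
    set C := (∏ i, ((α (Fin.succ i))! : ℝ)) / (d + k)!
    have hk : d + 1 + ∑ i, α i = α 0 + (d + k) + 1 := by rw [Fin.sum_univ_succ]; ring
    have hintegrand : ∀ s : ℝ, (1 - s) ^ d * (s ^ α 0 * (1 - s) ^ k * C) =
        s ^ α 0 * (1 - s) ^ (d + k) * C := fun s => by ring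
    simp_rw [hintegrand, intervalIntegral.integral_mul_const, integral_pow_mul_one_sub_pow, hk]
    rw [Fin.prod_univ_succ (fun i => ((α i)! : ℝ))]
    simp only [C]
    field_simp

theorem measureReal_unitSimplex (d : ℕ) : volume.real (unitSimplex d) = 1 / d ! := by
  simpa using integral_unitSimplex_prod_baryCoord_pow d 0

theorem integral_unitSimplex_baryCoord_mul (d : ℕ) (i j : Fin (d + 1)) :
    ∫ t in unitSimplex d, baryCoord t i * baryCoord t j =
      (if i = j then 2 else 1) / (d + 2)! := by
  have h := integral_unitSimplex_prod_baryCoord_pow d (Pi.single i 1 + Pi.single j 1)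
  simp only [Pi.add_apply, pow_add, Finset.prod_mul_distrib, Finset.sum_add_distrib,
    Pi.single_apply, pow_ite, pow_one, pow_zero, Finset.prod_ite_eq', Finset.sum_ite_eq',
    Finset.mem_univ, if_true] at h
  rw [h]
  congr 1
  split_ifs with hij
  · subst hij
    rw [Finset.prod_eq_single i (fun k _ hk => by simp [hk]) (by simp)]
    simp
  · exact_mod_cast Finset.prod_eq_one fun k _ => by split_ifs <;> simp_all

open ComplexConjugate in
theorem integral_unitSimplex_conj_mul (d : ℕ) (a b : Fin (d + 1) → ℂ) :
    ∫ t in unitSimplex d,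
        conj (∑ i, (baryCoord t i : ℂ) * a i) * ∑ j, (baryCoord t j : ℂ) * b j =
      ((d + 2)! : ℂ)⁻¹ * ∑ i, ∑ j, conj (a i) * (if i = j then 2 else 1) * b j := by
  have hexpand : ∀ t : Fin d → ℝ,
      conj (∑ i, (baryCoord t i : ℂ) * a i) * ∑ j, (baryCoord t j : ℂ) * b j =
        ∑ i, ∑ j, ((baryCoord t i * baryCoord t j : ℝ) : ℂ) * (conj (a i) * b j) := fun t => by
    simp only [map_sum, map_mul, Complex.conj_ofReal, Finset.sum_mul_sum, Complex.ofReal_mul]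
    exact Finset.sum_congr rfl fun i _ => Finset.sum_congr rfl fun j _ => by ring
  have hint : ∀ i j, Integrable
      (fun t => ((baryCoord t i * baryCoord t j : ℝ) : ℂ) * (conj (a i) * b j))
      (volume.restrict (unitSimplex d)) := fun i j =>
    Continuous.integrableOn_unitSimplex (by have := continuous_baryCoord d; fun_prop)
  simp_rw [hexpand]
  rw [integral_finsetSum _ fun i _ => integrable_finsetSum _ fun j _ => hint i j, Finset.mul_sum]
  refine Finset.sum_congr rfl fun i _ => ?_
  rw [integral_finsetSum _ fun j _ => hint i j, Finset.mul_sum]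
  refine Finset.sum_congr rfl fun j _ => ?_
  rw [integral_mul_const, integral_complex_ofReal, integral_unitSimplex_baryCoord_mul]
  split_ifs <;> push_cast <;> ring

theorem convexHull_range_eq_image_stdSimplex {ι F : Type*} [Fintype ι] [AddCommGroup F]
    [Module ℝ F] (v : ι → F) :
    convexHull ℝ (range v) = Fintype.linearCombination ℝ v '' stdSimplex ℝ ι := by
  classical
  rw [← convexHull_basis_eq_stdSimplex, LinearMap.image_convexHull, ← range_comp]
  congr
  ext i
  simp [Fintype.linearCombination_apply, ite_smul]

theorem image_unitSimplex_eq_convexHull {F : Type*} [AddCommGroup F] [Module ℝ F] {d : ℕ}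
    (v : Fin (d + 1) → F) :
    (fun t => ∑ i, baryCoord t i • v i) '' unitSimplex d = convexHull ℝ (range v) := by
  rw [convexHull_range_eq_image_stdSimplex, ← image_baryCoord_unitSimplex, image_image]
  simp [Fintype.linearCombination_apply]

theorem AffineIndependent.injective_sum_baryCoord_smul {F : Type*} [AddCommGroup F]
    [Module ℝ F] {d : ℕ} {v : Fin (d + 1) → F} (hv : AffineIndependent ℝ v) :
    Function.Injective fun t : Fin d → ℝ => ∑ i, baryCoord t i • v i := fun t t' h => by
  apply baryCoord_injective
  refine (affineIndependent_iff_eq_of_fintype_affineCombination_eq ℝ v).1 hv _ _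
    (sum_baryCoord t) (sum_baryCoord t') ?_
  rwa [Finset.affineCombination_eq_linear_combination _ _ _ (sum_baryCoord t),
    Finset.affineCombination_eq_linear_combination _ _ _ (sum_baryCoord t')]

theorem hasFDerivAt_sum_baryCoord_smul {F : Type*} [NormedAddCommGroup F] [NormedSpace ℝ F]
    {d : ℕ} (v : Fin (d + 1) → F) (t : Fin d → ℝ) :
    HasFDerivAt (fun t : Fin d → ℝ => ∑ i, baryCoord t i • v i) (edgeMap v) t := by
  have h : (fun t : Fin d → ℝ => ∑ i, baryCoord t i • v i) =
      fun t => edgeMap v t + v (Fin.last d) := by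
    ext1 t
    simp [edgeMap, baryCoord, Fin.sum_univ_castSucc, smul_sub, sub_smul, Finset.sum_smul]
    abel
  rw [h]
  exact (ContinuousLinearMap.hasFDerivAt _).add_const _

theorem integral_convexHull_eq_abs_det_smul {d : ℕ} {v : Fin (d + 1) → Fin d → ℝ}
    (hv : AffineIndependent ℝ v) (f : (Fin d → ℝ) → E) :
    ∫ x in convexHull ℝ (range v), f x =
      |(edgeMap v).det| • ∫ t in unitSimplex d, f (∑ i, baryCoord t i • v i) := by
  rw [← image_unitSimplex_eq_convexHull, integral_image_eq_integral_abs_det_fderiv_smul volume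
    (measurableSet_unitSimplex d)
    (fun t _ => (hasFDerivAt_sum_baryCoord_smul v t).hasFDerivWithinAt)
    hv.injective_sum_baryCoord_smul.injOn, integral_smul]

theorem integral_convexHull_eq_smul_integral_unitSimplex {d : ℕ}
    {v : Fin (d + 1) → Fin d → ℝ} (hv : AffineIndependent ℝ v) (f : (Fin d → ℝ) → E) :
    ∫ x in convexHull ℝ (range v), f x =
      (d ! * volume.real (convexHull ℝ (range v))) •
        ∫ t in unitSimplex d, f (∑ i, baryCoord t i • v i) := by
  have hvol := integral_convexHull_eq_abs_det_smul hv fun _ => (1 : ℝ)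
  simp only [integral_const, measureReal_restrict_apply_univ, smul_eq_mul, mul_one,
    measureReal_unitSimplex] at hvol
  rw [integral_convexHull_eq_abs_det_smul hv, hvol]
  field_simp

theorem apply_sum_smul_of_affine {ι : Type*} [Fintype ι] {d : ℕ} {a : Fin d → ℂ} {a0 : ℂ}
    {f : (Fin d → ℝ) → ℂ} (hf : ∀ x, f x = (∑ i, a i * (x i : ℂ)) + a0) {w : ι → ℝ}
    (hw : ∑ k, w k = 1) (v : ι → Fin d → ℝ) :
    f (∑ k, w k • v k) = ∑ k, (w k : ℂ) * f (v k) := by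
  have hw' : ∑ k, (w k : ℂ) = 1 := by exact_mod_cast hw
  simp only [hf, Finset.sum_apply, Pi.smul_apply, smul_eq_mul, Complex.ofReal_sum,
    Complex.ofReal_mul, mul_add, Finset.sum_add_distrib, ← Finset.sum_mul, hw', one_mul,
    Finset.mul_sum]
  rw [Finset.sum_comm]
  congr 1
  exact Finset.sum_congr rfl fun i _ => Finset.sum_congr rfl fun k _ => by ring

theorem integral_conj_mul_affine_simplex_general (d : ℕ)
    (a b : Fin d → ℂ) (a0 b0 : ℂ) (f g : (Fin d → ℝ) → ℂ)
    (hf : ∀ x, f x = (∑ i, a i * (x i : ℂ)) + a0)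
    (hg : ∀ x, g x = (∑ i, b i * (x i : ℂ)) + b0)
    (v : Fin (d + 1) → (Fin d → ℝ)) (hv : AffineIndependent ℝ v) :
    ∫ x in convexHull ℝ (Set.range v), (starRingEnd ℂ) (f x) * g x =
      (((volume (convexHull ℝ (Set.range v))).toReal / ((d + 1) * (d + 2)) : ℝ) : ℂ) *
        ∑ i, ∑ j, (starRingEnd ℂ) (f (v i)) * (if i = j then 2 else 1) * g (v j) := by
  simp_rw [integral_convexHull_eq_smul_integral_unitSimplex hv,
    apply_sum_smul_of_affine hf (sum_baryCoord _), apply_sum_smul_of_affine hg (sum_baryCoord _),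
    integral_unitSimplex_conj_mul, ← measureReal_def, Complex.real_smul, ← mul_assoc]
  congr 1
  have hfac : ((d + 2)! : ℂ) = (d + 2) * (d + 1) * d ! := by
    push_cast [Nat.factorial_succ]
    ring
  have hfac0 : (d ! : ℂ) ≠ 0 := Nat.cast_ne_zero.2 d.factorial_ne_zero
  rw [hfac]
  push_cast
  field_simp

/-- the `L₂` inner product of two complex affine functions over a `d`-simplex is a
Hermitian form in the vertex values with matrix `P = 1 + I`. -/
theorem integral_conj_mul_affine_simplex (d : ℕ) (hd : 1 ≤ d)
    (a b : Fin d → ℂ) (a0 b0 : ℂ) (f g : (Fin d → ℝ) → ℂ)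
    (hf : ∀ x, f x = (∑ i, a i * (x i : ℂ)) + a0)
    (hg : ∀ x, g x = (∑ i, b i * (x i : ℂ)) + b0)
    (v : Fin (d + 1) → (Fin d → ℝ)) (hv : AffineIndependent ℝ v) :
    ∫ x in convexHull ℝ (Set.range v), (starRingEnd ℂ) (f x) * g x =
      (((volume (convexHull ℝ (Set.range v))).toReal / ((d + 1) * (d + 2)) : ℝ) : ℂ) *
        ∑ i, ∑ j, (starRingEnd ℂ) (f (v i)) * (if i = j then 2 else 1) * g (v j) :=
  integral_conj_mul_affine_simplex_general d a b a0 b0 f g hf hg v hv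
end

section
/- Let d ≥ 1 and let D : ℝ^d → ℝ be the Cartesian linear box spline. Then for every x ∈ ℝ^d, the set {k ∈ ℤ^d : D(x − k) ≠ 0} has at most d+1 elements. -/
/-- The Cartesian linear box spline on `ℝ^d`:
`D(x) = Σ_{ε ∈ {0,1}^{d+1}} (−1)^{|ε|} max(0, min_{1 ≤ i ≤ d} (x_i − ε_i − ε_{d+1}))`. -/
noncomputable def boxSplineD (d : ℕ) (x : Fin d → ℝ) : ℝ :=
  ∑ ε : Fin (d + 1) → Fin 2,
    (-1 : ℝ) ^ (∑ i, (ε i : ℕ)) *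
      max 0 (⨅ i : Fin d, (x i - ((ε (Fin.castSucc i) : ℕ) : ℝ) - ((ε (Fin.last d) : ℕ) : ℝ)))

/-!
Summing out `ε_{d+1}` turns `D(y)` into `Σ_{ε ∈ {0,1}^d} (-1)^{|ε|} min_i c(y_i - ε_i)` with the
clamp `c t = max 0 (min t 1)`. If `y_i ≤ 0`, `y_i ≥ 2`, or `y_i ≥ y_j + 1` for some `j`, the
minimum does not depend on `ε_i` (in the last case its `i`-th entry is dominated by the `j`-th),
so flipping `ε_i` cancels the sum. Hence every shift `k` with `D(x - k) ≠ 0` lies in the box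
`⌈x⌉ - 2 ≤ k ≤ ⌈x⌉ - 1`, and any two such shifts are comparable coordinatewise. On a chain in
this box `k ↦ Σ_i k_i` is injective with at most `d + 1` values.
-/

theorem neg_one_pow_sum_update_add_one {ι R : Type*} [Fintype ι] [DecidableEq ι] [Ring R]
    (ε : ι → Fin 2) (p : ι) :
    (-1 : R) ^ (∑ k, (Function.update ε p (ε p + 1) k : ℕ)) = -(-1) ^ (∑ k, (ε k : ℕ)) := by
  have split (η : ι → Fin 2) : ∑ k, (η k : ℕ) = η p + ∑ k ∈ Finset.univ.erase p, (η k : ℕ) :=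
    (Finset.add_sum_erase _ _ (Finset.mem_univ p)).symm
  rw [split, split ε, Function.update_self,
    Finset.sum_congr rfl fun k hk => by rw [Function.update_of_ne (Finset.ne_of_mem_erase hk)]]
  rcases Fin.exists_fin_two.mp ⟨ε p, rfl⟩ with h | h <;> simp [h, pow_add]

theorem sum_neg_one_pow_mul_eq_zero_of_update {ι R : Type*} [Fintype ι] [DecidableEq ι]
    [Ring R] (p : ι) (F : (ι → Fin 2) → R) (hF : ∀ ε a, F (Function.update ε p a) = F ε) :
    ∑ ε : ι → Fin 2, (-1 : R) ^ (∑ k, (ε k : ℕ)) * F ε = 0 := by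
  refine Finset.sum_ninvolution (fun ε => Function.update ε p (ε p + 1)) (fun ε => ?_)
    (fun ε _ h => ?_) (fun _ => Finset.mem_univ _) (fun ε => ?_)
  · rw [neg_one_pow_sum_update_add_one, hF, neg_mul, add_neg_cancel]
  · simpa using congrFun h p
  · have : ∀ a : Fin 2, a + 1 + 1 = a := by decide
    simp [this]

theorem ciInf_update_of_le {ι α : Type*} [Finite ι] [DecidableEq ι]
    [ConditionallyCompleteLinearOrder α] (f : ι → α) {i j : ι} (hji : j ≠ i) {v : α}
    (hv : f j ≤ v) (hi : f j ≤ f i) : ⨅ k, Function.update f i v k = ⨅ k, f k := by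
  have : Nonempty ι := ⟨i⟩
  have hle (g g' : ι → α) (hgg' : ∀ k ≠ i, g k = g' k) (hg' : g' j ≤ g' i) :
      ⨅ k, g k ≤ ⨅ k, g' k := by
    refine le_ciInf fun k => ?_
    rcases eq_or_ne k i with rfl | hk
    · exact (ciInf_le (Finite.bddBelow_range g) j).trans ((hgg' j hji).trans_le hg')
    · exact (ciInf_le (Finite.bddBelow_range g) k).trans_eq (hgg' k hk)
  have hoff : ∀ k ≠ i, Function.update f i v k = f k := fun k hk => Function.update_of_ne hk _ _
  exact le_antisymm (hle _ _ hoff hi)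
    (hle _ _ (fun k hk => (hoff k hk).symm) (by simpa [Function.update_of_ne hji] using hv))

theorem max_zero_sub_max_zero_sub_one (t : ℝ) : max 0 t - max 0 (t - 1) = max 0 (min t 1) := by
  rcases le_total t 0 with h | h
  · simp [h, show t - 1 ≤ 0 by linarith]
  rcases le_total t 1 with h' | h'
  · simp [h, h', show t - 1 ≤ 0 by linarith]
  · simp [h, h', show 0 ≤ t - 1 by linarith]

theorem monotone_max_zero_min_one : Monotone fun t : ℝ => max 0 (min t 1) :=
  monotone_const.max (monotone_id.min monotone_const)

theorem boxSplineD_eq_sum_iInf {d : ℕ} [NeZero d] (y : Fin d → ℝ) :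
    boxSplineD d y = ∑ ε : Fin d → Fin 2,
      (-1 : ℝ) ^ (∑ k, (ε k : ℕ)) * ⨅ k, max 0 (min (y k - ε k) 1) := by
  rw [boxSplineD, ← (Fin.snocEquiv fun _ => Fin 2).sum_comp, Fintype.sum_prod_type,
    Fin.sum_univ_two, ← Finset.sum_add_distrib]
  refine Finset.sum_congr rfl fun ε _ => ?_
  have hshift : ⨅ k, (y k - ε k - 1) = (⨅ k, (y k - ε k)) - 1 :=
    (Monotone.map_ciInf_of_continuousAt (f := fun t : ℝ => t - 1) (by fun_prop)
      (fun _ _ h => sub_le_sub_right h 1) (Finite.bddBelow_range _)).symm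
  have hclamp : max 0 (min (⨅ k, (y k - ε k)) 1) = ⨅ k, max 0 (min (y k - ε k) 1) :=
    monotone_max_zero_min_one.map_ciInf_of_continuousAt (by fun_prop) (Finite.bddBelow_range _)
  simp only [Fin.snocEquiv_apply, Fin.sum_univ_castSucc, Fin.snoc_castSucc, Fin.snoc_last,
    Fin.isValue, Fin.val_zero, Fin.val_one, Nat.cast_zero, Nat.cast_one, sub_zero, add_zero,
    pow_succ]
  rw [← hclamp, ← max_zero_sub_max_zero_sub_one, ← hshift]
  ring

theorem boxSplineD_eq_zero_of_update {d : ℕ} (y : Fin d → ℝ) (i : Fin d)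
    (h : ∀ (ε : Fin d → Fin 2) a, ⨅ k, max 0 (min (y k - Function.update ε i a k) 1) =
      ⨅ k, max 0 (min (y k - ε k) 1)) :
    boxSplineD d y = 0 := by
  have : NeZero d := NeZero.of_pos i.pos
  rw [boxSplineD_eq_sum_iInf]
  exact sum_neg_one_pow_mul_eq_zero_of_update i _ h

theorem boxSplineD_eq_zero_of_clamp_const {d : ℕ} (y : Fin d → ℝ) (i : Fin d)
    (h : ∀ a b : Fin 2, max 0 (min (y i - a) 1) = max 0 (min (y i - b) 1)) :
    boxSplineD d y = 0 := by
  refine boxSplineD_eq_zero_of_update y i fun ε a => ?_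
  congr 1 with k
  rcases eq_or_ne k i with rfl | hk
  · rw [Function.update_self, h]
  · rw [Function.update_of_ne hk]

theorem boxSplineD_eq_zero_of_nonpos {d : ℕ} (y : Fin d → ℝ) {i : Fin d} (hi : y i ≤ 0) :
    boxSplineD d y = 0 := by
  refine boxSplineD_eq_zero_of_clamp_const y i fun a b => ?_
  have (c : Fin 2) : max 0 (min (y i - c) 1) = 0 :=
    max_eq_left ((min_le_left _ _).trans (by linarith [Nat.cast_nonneg (α := ℝ) c.val]))
  rw [this, this]

theorem boxSplineD_eq_zero_of_two_le {d : ℕ} (y : Fin d → ℝ) {i : Fin d} (hi : 2 ≤ y i) :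
    boxSplineD d y = 0 := by
  refine boxSplineD_eq_zero_of_clamp_const y i fun a b => ?_
  have (c : Fin 2) : max 0 (min (y i - c) 1) = 1 := by
    have : ((c : ℕ) : ℝ) ≤ 1 := by exact_mod_cast Fin.is_le c
    rw [min_eq_right (by linarith), max_eq_right zero_le_one]
  rw [this, this]

theorem boxSplineD_eq_zero_of_add_one_le {d : ℕ} (y : Fin d → ℝ) {i j : Fin d}
    (hij : y j + 1 ≤ y i) : boxSplineD d y = 0 := by
  have hji : j ≠ i := by rintro rfl; linarith
  refine boxSplineD_eq_zero_of_update y i fun ε a => ?_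
  have hle (b c : Fin 2) : max 0 (min (y j - b) 1) ≤ max 0 (min (y i - c) 1) := by
    have : ((c : ℕ) : ℝ) ≤ 1 := by exact_mod_cast Fin.is_le c
    exact monotone_max_zero_min_one (by linarith [Nat.cast_nonneg (α := ℝ) b.val])
  have hupd : (fun k => max 0 (min (y k - Function.update ε i a k) 1)) =
      Function.update (fun k => max 0 (min (y k - ε k) 1)) i (max 0 (min (y i - a) 1)) :=
    funext (Function.apply_update (fun k (t : Fin 2) => max 0 (min (y k - t) 1)) ε i a)
  rw [hupd]
  exact ciInf_update_of_le _ hji (hle _ _) (hle _ _)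

theorem IsChain.ncard_le_card_add_one {ι : Type*} [Fintype ι] {S : Set (ι → ℤ)}
    (hS : IsChain (· ≤ ·) S) {c : ι → ℤ} (hc : S ⊆ Set.Icc c (c + 1)) :
    S.ncard ≤ Fintype.card ι + 1 := by
  have hinj : Set.InjOn (fun k => ∑ i, k i) S := by
    intro k hk k' hk' hsum
    rcases hS.total hk hk' with hle | hle
    · exact funext fun i =>
        (Finset.sum_eq_sum_iff_of_le fun i _ => hle i).mp hsum i (Finset.mem_univ i)
    · exact funext fun i =>
        ((Finset.sum_eq_sum_iff_of_le fun i _ => hle i).mp hsum.symm i (Finset.mem_univ i)).symm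
  have hmaps : ∀ k ∈ S, ∑ i, k i ∈ Set.Icc (∑ i, c i) (∑ i, c i + Fintype.card ι) := by
    intro k hk
    refine ⟨Finset.sum_le_sum fun i _ => (hc hk).1 i, ?_⟩
    calc ∑ i, k i ≤ ∑ i, (c i + 1) := Finset.sum_le_sum fun i _ => (hc hk).2 i
      _ = ∑ i, c i + Fintype.card ι := by simp [Finset.sum_add_distrib]
  calc S.ncard ≤ (Set.Icc (∑ i, c i) (∑ i, c i + Fintype.card ι)).ncard :=
        Set.ncard_le_ncard_of_injOn _ hmaps hinj (Set.finite_Icc _ _)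
    _ = Fintype.card ι + 1 := by
      rw [← Finset.coe_Icc, Set.ncard_coe_finset, Int.card_Icc]
      omega

theorem boxSplineD_shifts_subset_Icc {d : ℕ} (x : Fin d → ℝ) :
    {k : Fin d → ℤ | boxSplineD d (fun i => x i - k i) ≠ 0} ⊆
      Set.Icc (fun i => ⌈x i⌉ - 2) ((fun i => ⌈x i⌉ - 2) + 1) := by
  intro k hk
  refine ⟨fun i => ?_, fun i => ?_⟩
  · have : x i - k i < 2 := not_le.mp fun h => hk (boxSplineD_eq_zero_of_two_le _ h)
    have : ⌈x i⌉ ≤ k i + 2 := Int.ceil_le.mpr (by push_cast; linarith)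
    show ⌈x i⌉ - 2 ≤ k i
    omega
  · have : 0 < x i - k i := not_le.mp fun h => hk (boxSplineD_eq_zero_of_nonpos _ h)
    have : k i < ⌈x i⌉ := Int.lt_ceil.mpr (by linarith)
    show k i ≤ ⌈x i⌉ - 2 + 1
    omega

theorem isChain_boxSplineD_shifts {d : ℕ} (x : Fin d → ℝ) :
    IsChain (· ≤ ·) {k : Fin d → ℤ | boxSplineD d (fun i => x i - k i) ≠ 0} := by
  intro k hk k' hk' _
  by_contra h
  simp only [not_or, Pi.le_def, not_forall, not_le] at h
  obtain ⟨⟨i, hi⟩, ⟨j, hj⟩⟩ := h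
  replace hi : (k' i : ℝ) + 1 ≤ k i := by exact_mod_cast Int.add_one_le_iff.mpr hi
  replace hj : (k j : ℝ) + 1 ≤ k' j := by exact_mod_cast Int.add_one_le_iff.mpr hj
  rcases le_or_gt (x i - k i + 1) (x j - k j) with h | h
  · exact hk (boxSplineD_eq_zero_of_add_one_le _ h)
  · exact hk' (boxSplineD_eq_zero_of_add_one_le (i := i) (j := j) _ (by linarith))

theorem boxSpline_shifts_card_le_general (d : ℕ) (x : Fin d → ℝ) :
    {k : Fin d → ℤ | boxSplineD d (fun i => x i - (k i : ℝ)) ≠ 0}.Finite ∧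
    {k : Fin d → ℤ | boxSplineD d (fun i => x i - (k i : ℝ)) ≠ 0}.ncard ≤ d + 1 := by
  have hbox := boxSplineD_shifts_subset_Icc x
  refine ⟨(Set.finite_Icc _ _).subset hbox, ?_⟩
  simpa using (isChain_boxSplineD_shifts x).ncard_le_card_add_one hbox

/-- at every point of `ℝ^d`, at most `d+1` of the integer shifts of the
Cartesian linear box spline are nonzero. -/
theorem boxSpline_shifts_card_le (d : ℕ) (hd : 1 ≤ d) (x : Fin d → ℝ) :
    {k : Fin d → ℤ | boxSplineD d (fun i => x i - (k i : ℝ)) ≠ 0}.Finite ∧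
    {k : Fin d → ℤ | boxSplineD d (fun i => x i - (k i : ℝ)) ≠ 0}.ncard ≤ d + 1 :=
  boxSpline_shifts_card_le_general d x
end
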